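/- Let F = {f₁,…,f_k} be an IFS of similarities on ℝ^d satisfying the open set condition with common similarity factor c ∈ (0,1) and attractor K of positive diameter. Then dim_B(K) ≤ γ_c · dim¹(K), where γ_c = −log 2 / log c and dim¹(K) = lim_{n→∞} log N_n(K) / (n log 2) is the fractal dimension I of K with respect to its natural fractal structure. -/
import Mathlib


open Metric Set Filter Topology MeasureTheory ENNReal NNReal

noncomputable section

/-- A map is a similarity with factor `c` if it scales all distances exactly by `c`. -/
def IsSimilarity {X : Type*} [MetricSpace X] (f : X → X) (c : ℝ) : Prop :=
  ∀ x y, dist (f x) (f y) = c * dist x y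

/-- Composition `f_{ω₁} ∘ ⋯ ∘ f_{ω_n}` of the maps of an IFS along a word `ω`. -/
def wordComp {X : Type*} {k : ℕ} (f : Fin k → X → X) {n : ℕ} (ω : Fin n → Fin k) : X → X :=
  (List.ofFn fun i => f (ω i)).foldr (· ∘ ·) id

/-- Number of elements of level `Γ_n` of the natural fractal structure (counted with
multiplicity over words) that meet `K`. -/
def levelCount {X : Type*} [MetricSpace X] {k : ℕ} (f : Fin k → X → X) (K : Set X)
    (n : ℕ) : ℕ :=
  Set.ncard {ω : Fin n → Fin k | ((wordComp f ω '' K) ∩ K).Nonempty}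

/-- `δ(K, Γ_n)`: supremum of diameters of the elements of level `Γ_n` meeting `K`. -/
def deltaLevel {X : Type*} [MetricSpace X] {k : ℕ} (f : Fin k → X → X) (K : Set X)
    (n : ℕ) : ℝ :=
  sSup {d : ℝ | ∃ ω : Fin n → Fin k, ((wordComp f ω '' K) ∩ K).Nonempty ∧
    d = Metric.diam (wordComp f ω '' K)}

/-- `N_δ(K)`: the largest number of disjoint closed balls of radius `δ` with centres in `K`. -/
def packingNum {X : Type*} [MetricSpace X] (K : Set X) (δ : ℝ) : ℕ :=
  sSup {m : ℕ | ∃ t : Finset X, t.card = m ∧ ↑t ⊆ K ∧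
    (t : Set X).Pairwise fun x y => Disjoint (Metric.closedBall x δ) (Metric.closedBall y δ)}

/-- The pre-measure `H^s_{n,3}(K)`: infimum over whole levels `m ≥ n` of the sum of the
`s`-th powers of the diameters of all elements of that level (with multiplicity). -/
def H3pre {X : Type*} [MetricSpace X] {k : ℕ} (f : Fin k → X → X) (K : Set X)
    (s : ℝ) (n : ℕ) : ℝ≥0∞ :=
  ⨅ m : {m : ℕ // n ≤ m}, ∑ ω : Fin m.1 → Fin k,
    ENNReal.ofReal (Metric.diam (wordComp f ω '' K)) ^ s

/-- `H^s_3(K)`: the (monotone) limit of `H^s_{n,3}(K)` as `n → ∞`. -/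
def H3 {X : Type*} [MetricSpace X] {k : ℕ} (f : Fin k → X → X) (K : Set X) (s : ℝ) : ℝ≥0∞ :=
  ⨆ n : ℕ, H3pre f K s n

/-- `H^s_4(K)`: limit over `n` of the infimum over finite covers of `K` by elements of
levels `≥ n` of the natural fractal structure. -/
def H4 {X : Type*} [MetricSpace X] {k : ℕ} (f : Fin k → X → X) (K : Set X) (s : ℝ) : ℝ≥0∞ :=
  ⨆ n : ℕ, ⨅ (𝒜 : Set (Set X)) (_ : 𝒜.Finite ∧
      (∀ A ∈ 𝒜, ∃ m, n ≤ m ∧ ∃ ω : Fin m → Fin k, A = wordComp f ω '' K) ∧ K ⊆ ⋃₀ 𝒜),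
    ∑' A : 𝒜, ENNReal.ofReal (Metric.diam (A : Set X)) ^ s

/-- `H^s_5(K)`: limit over `n` of the infimum over countable covers of `K` by elements of
levels `≥ n` of the natural fractal structure. -/
def H5 {X : Type*} [MetricSpace X] {k : ℕ} (f : Fin k → X → X) (K : Set X) (s : ℝ) : ℝ≥0∞ :=
  ⨆ n : ℕ, ⨅ (𝒜 : Set (Set X)) (_ : 𝒜.Countable ∧
      (∀ A ∈ 𝒜, ∃ m, n ≤ m ∧ ∃ ω : Fin m → Fin k, A = wordComp f ω '' K) ∧ K ⊆ ⋃₀ 𝒜),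
    ∑' A : 𝒜, ENNReal.ofReal (Metric.diam (A : Set X)) ^ s

/-- `H^s_6(K)`: limit as `δ → 0` of the infimum over countable covers of `K` by
fractal-structure elements of diameter at most `δ`. -/
def H6 {X : Type*} [MetricSpace X] {k : ℕ} (f : Fin k → X → X) (K : Set X) (s : ℝ) : ℝ≥0∞ :=
  ⨆ (δ : ℝ) (_ : 0 < δ), ⨅ (𝒜 : Set (Set X)) (_ : 𝒜.Countable ∧
      (∀ A ∈ 𝒜, (∃ m, ∃ ω : Fin m → Fin k, A = wordComp f ω '' K) ∧ Metric.diam A ≤ δ) ∧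
      K ⊆ ⋃₀ 𝒜),
    ∑' A : 𝒜, ENNReal.ofReal (Metric.diam (A : Set X)) ^ s

/-- The open set condition for a family of self-maps of `ℝ^d`. -/
def OSC {d k : ℕ} (f : Fin k → EuclideanSpace ℝ (Fin d) → EuclideanSpace ℝ (Fin d)) : Prop :=
  ∃ V : Set (EuclideanSpace ℝ (Fin d)), V.Nonempty ∧ IsOpen V ∧ Bornology.IsBounded V ∧
    (∀ i, f i '' V ⊆ V) ∧ Pairwise fun i j => Disjoint (f i '' V) (f j '' V)


/-! ### Auxiliary lemmas -/

lemma wordComp_zero {X : Type*} {k : ℕ} (f : Fin k → X → X) (ω : Fin 0 → Fin k) :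
    wordComp f ω = id := by simp [wordComp]

lemma wordComp_succ {X : Type*} {k : ℕ} (f : Fin k → X → X) {n : ℕ} (ω : Fin (n+1) → Fin k) :
    wordComp f ω = f (ω 0) ∘ wordComp f (ω ∘ Fin.succ) := by
  simp [wordComp, List.ofFn_succ, Function.comp]

lemma IsSimilarity.comp {X : Type*} [MetricSpace X] {g h : X → X} {a b : ℝ}
    (hg : IsSimilarity g a) (hh : IsSimilarity h b) : IsSimilarity (g ∘ h) (a * b) := by
  intro x y; simp only [Function.comp]; rw [hg, hh, mul_assoc]

lemma wordComp_isSimilarity {X : Type*} [MetricSpace X] {k : ℕ} {f : Fin k → X → X} {c : ℝ}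
    (hf : ∀ i, IsSimilarity (f i) c) : ∀ {n : ℕ} (ω : Fin n → Fin k),
    IsSimilarity (wordComp f ω) (c ^ n) := by
  intro n
  induction n with
  | zero => intro ω; rw [wordComp_zero]; intro x y; simp
  | succ n ih =>
    intro ω
    rw [wordComp_succ, pow_succ, mul_comm]
    exact (hf (ω 0)).comp (ih _)

lemma IsSimilarity.diam_image {X : Type*} [MetricSpace X] {g : X → X} {r : ℝ}
    (hg : IsSimilarity g r) (hr : 0 ≤ r) {K : Set X} (hK : Bornology.IsBounded K) :
    Metric.diam (g '' K) = r * Metric.diam K := by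
  have himb : Bornology.IsBounded (g '' K) := by
    rcases Metric.isBounded_iff.1 hK with ⟨C, hC⟩
    exact Metric.isBounded_iff.2 ⟨r * C, by
      rintro _ ⟨x, hx, rfl⟩ _ ⟨y, hy, rfl⟩
      rw [hg]
      exact mul_le_mul_of_nonneg_left (hC hx hy) hr⟩
  apply le_antisymm
  · apply Metric.diam_le_of_forall_dist_le (by positivity)
    rintro _ ⟨x, hx, rfl⟩ _ ⟨y, hy, rfl⟩
    rw [hg]
    exact mul_le_mul_of_nonneg_left (Metric.dist_le_diam_of_mem hK hx hy) hr
  · rcases eq_or_lt_of_le hr with h0 | h0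
    · simp [← h0, Metric.diam_nonneg]
    · have h1 : Metric.diam K ≤ Metric.diam (g '' K) / r := by
        apply Metric.diam_le_of_forall_dist_le (by positivity)
        intro x hx y hy
        rw [le_div_iff₀ h0, mul_comm, ← hg]
        exact Metric.dist_le_diam_of_mem himb ⟨x, hx, rfl⟩ ⟨y, hy, rfl⟩
      calc r * Metric.diam K ≤ r * (Metric.diam (g '' K) / r) :=
            mul_le_mul_of_nonneg_left h1 hr
        _ = Metric.diam (g '' K) := by field_simp

lemma IsSimilarity.isBounded_image {X : Type*} [MetricSpace X] {g : X → X} {r : ℝ}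
    (hg : IsSimilarity g r) (hr : 0 ≤ r) {K : Set X} (hK : Bornology.IsBounded K) :
    Bornology.IsBounded (g '' K) := by
  rcases Metric.isBounded_iff.1 hK with ⟨C, hC⟩
  exact Metric.isBounded_iff.2 ⟨r * C, by
    rintro _ ⟨x, hx, rfl⟩ _ ⟨y, hy, rfl⟩
    rw [hg]
    exact mul_le_mul_of_nonneg_left (hC hx hy) hr⟩

section Pieces
variable {X : Type*} [MetricSpace X] {k : ℕ} {f : Fin k → X → X} {K : Set X}

omit [MetricSpace X] in
lemma piece_subset (hK : K = ⋃ i, f i '' K) : ∀ {n : ℕ} (ω : Fin n → Fin k),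
    wordComp f ω '' K ⊆ K := by
  intro n
  induction n with
  | zero => intro ω; rw [wordComp_zero]; simp
  | succ n ih =>
    intro ω
    rw [wordComp_succ, Set.image_comp]
    have h2 : f (ω 0) '' K ⊆ ⋃ i, f i '' K := Set.subset_iUnion (fun i => f i '' K) (ω 0)
    rw [← hK] at h2
    exact subset_trans (Set.image_mono (ih _)) h2

omit [MetricSpace X] in
lemma subset_union_pieces (hK : K = ⋃ i, f i '' K) : ∀ (n : ℕ),
    K ⊆ ⋃ ω : Fin n → Fin k, wordComp f ω '' K := by
  intro n
  induction n with
  | zero =>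
    intro x hx
    exact Set.mem_iUnion.2 ⟨fun i => i.elim0, by rw [wordComp_zero]; simpa⟩
  | succ n ih =>
    intro x hx
    rw [hK] at hx
    rcases Set.mem_iUnion.1 hx with ⟨i, y, hy, rfl⟩
    rcases Set.mem_iUnion.1 (ih hy) with ⟨ω, z, hz, rfl⟩
    refine Set.mem_iUnion.2 ⟨Fin.cons i ω, z, hz, ?_⟩
    rw [wordComp_succ]
    have hcs : Fin.cons i ω ∘ Fin.succ = ω := funext fun j => by simp [Function.comp]
    simp [hcs]

lemma levelCount_eq (hK : K = ⋃ i, f i '' K) (hne : K.Nonempty) (n : ℕ) :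
    levelCount f K n = k ^ n := by
  unfold levelCount
  have : {ω : Fin n → Fin k | ((wordComp f ω '' K) ∩ K).Nonempty} = Set.univ := by
    ext ω
    simp only [Set.mem_setOf_eq, Set.mem_univ, iff_true]
    rcases hne with ⟨x, hx⟩
    exact ⟨wordComp f ω x, ⟨x, hx, rfl⟩, piece_subset hK ω ⟨x, hx, rfl⟩⟩
  rw [this, Set.ncard_univ, Nat.card_eq_fintype_card]
  simp

end Pieces

lemma packing_mem_le {d k n : ℕ} {f : Fin k → EuclideanSpace ℝ (Fin d) → EuclideanSpace ℝ (Fin d)}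
    {K : Set (EuclideanSpace ℝ (Fin d))} {δ : ℝ}
    (hcover : K ⊆ ⋃ ω : Fin n → Fin k, wordComp f ω '' K)
    (hdiam : ∀ ω : Fin n → Fin k, Metric.diam (wordComp f ω '' K) ≤ 2 * δ)
    (hbd : ∀ ω : Fin n → Fin k, Bornology.IsBounded (wordComp f ω '' K))
    {m : ℕ} (hm : m ∈ {m : ℕ | ∃ t : Finset (EuclideanSpace ℝ (Fin d)), t.card = m ∧ ↑t ⊆ K ∧
      (t : Set (EuclideanSpace ℝ (Fin d))).Pairwise fun x y =>
        Disjoint (Metric.closedBall x δ) (Metric.closedBall y δ)}) :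
    m ≤ k ^ n := by
  obtain ⟨t, rfl, hts, hdisj⟩ := hm
  have hchoice : ∀ x : t, ∃ ω : Fin n → Fin k, (x : EuclideanSpace ℝ (Fin d)) ∈ wordComp f ω '' K :=
    fun x => Set.mem_iUnion.1 (hcover (hts x.2))
  choose g hg using hchoice
  have hginj : Function.Injective g := by
    intro x y hxy
    by_contra hne
    have hne' : (x : EuclideanSpace ℝ (Fin d)) ≠ y := fun h => hne (Subtype.ext h)
    have hdis := hdisj x.2 y.2 hne'
    have hdxy : dist (x : EuclideanSpace ℝ (Fin d)) y ≤ 2 * δ := by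
      have := Metric.dist_le_diam_of_mem (hbd (g x)) (hg x) (by rw [hxy]; exact hg y)
      exact this.trans (hdiam _)
    have hmid : midpoint ℝ (x : EuclideanSpace ℝ (Fin d)) y ∈
        Metric.closedBall (x : EuclideanSpace ℝ (Fin d)) δ ∩
          Metric.closedBall (y : EuclideanSpace ℝ (Fin d)) δ := by
      constructor
      · rw [Metric.mem_closedBall, dist_midpoint_left]
        simp only [Real.norm_two]
        linarith
      · rw [Metric.mem_closedBall, dist_midpoint_right]
        simp only [Real.norm_two]
        linarith
    exact Set.disjoint_left.1 hdis hmid.1 hmid.2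
  calc t.card = Fintype.card t := (Fintype.card_coe t).symm
    _ ≤ Fintype.card (Fin n → Fin k) := Fintype.card_le_of_injective g hginj
    _ = k ^ n := by simp


lemma div_le_div_of_nonneg_right' {a b c : ℝ} (h : a ≤ b) (hc : 0 < c) : a / c ≤ b / c :=
  (div_le_div_iff_of_pos_right hc).2 h

/-- under the OSC with common factor `c`, the box dimension is at most
`γ_c · dim¹(K)` with `γ_c = -log 2 / log c`. -/
theorem box_le_gamma_mul_dim1 {d k : ℕ} (hk : 0 < k)
    (f : Fin k → EuclideanSpace ℝ (Fin d) → EuclideanSpace ℝ (Fin d))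
    (c : ℝ) (hc : c ∈ Set.Ioo (0 : ℝ) 1)
    (hf : ∀ i, IsSimilarity (f i) c) (hosc : OSC f)
    (K : Set (EuclideanSpace ℝ (Fin d))) (hne : K.Nonempty) (hcpt : IsCompact K)
    (hK : K = ⋃ i, f i '' K) (hdiam : 0 < Metric.diam K)
    (b d1 : ℝ)
    (hbox : Filter.Tendsto (fun δ : ℝ => Real.log (packingNum K δ) / (-Real.log δ))
      (𝓝[>] (0 : ℝ)) (𝓝 b))
    (hdim1 : Filter.Tendsto
      (fun n : ℕ => Real.log (levelCount f K n) / (n * Real.log 2))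
      Filter.atTop (𝓝 d1)) :
    b ≤ (-Real.log 2 / Real.log c) * d1 := by
  classical
  have hD : 0 < Metric.diam K := hdiam
  have hbdK : Bornology.IsBounded K := hcpt.isBounded
  have hc0 := hc.1
  have hc1 := hc.2
  have hlc : Real.log c < 0 := Real.log_neg hc0 hc1
  have hlc0 : Real.log c ≠ 0 := hlc.ne
  have hl2 : 0 < Real.log 2 := Real.log_pos one_lt_two
  have hk1 : (1 : ℝ) ≤ (k : ℝ) := by exact_mod_cast hk
  have hlk : 0 ≤ Real.log k := Real.log_nonneg hk1
  -- identify d1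
  have hd1 : d1 = Real.log k / Real.log 2 := by
    have hconst : Filter.Tendsto
        (fun n : ℕ => Real.log (levelCount f K n) / (n * Real.log 2))
        Filter.atTop (𝓝 (Real.log k / Real.log 2)) := by
      apply Filter.Tendsto.congr' _ tendsto_const_nhds
      filter_upwards [Filter.eventually_ge_atTop 1] with n hn
      have hn0 : (n : ℝ) ≠ 0 := by exact_mod_cast Nat.one_le_iff_ne_zero.1 hn
      rw [levelCount_eq hK hne n]
      push_cast
      rw [Real.log_pow, mul_div_mul_left _ _ hn0]
    exact tendsto_nhds_unique hdim1 hconst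
  rw [hd1]
  have hgoal : -Real.log 2 / Real.log c * (Real.log k / Real.log 2) =
      -Real.log k / Real.log c := by
    field_simp
  rw [hgoal]
  -- diameters of level pieces
  have hpiece_diam : ∀ (n : ℕ) (ω : Fin n → Fin k),
      Metric.diam (wordComp f ω '' K) = c ^ n * Metric.diam K :=
    fun n ω => (wordComp_isSimilarity hf ω).diam_image (pow_nonneg hc0.le n) hbdK
  have hpiece_bd : ∀ (n : ℕ) (ω : Fin n → Fin k),
      Bornology.IsBounded (wordComp f ω '' K) :=
    fun n ω => (wordComp_isSimilarity hf ω).isBounded_image (pow_nonneg hc0.le n) hbdK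
  -- the comparison function and its limit
  have h1 : Filter.Tendsto (fun δ : ℝ => -Real.log δ) (𝓝[>] (0:ℝ)) Filter.atTop :=
    Filter.tendsto_neg_atBot_atTop.comp Real.tendsto_log_nhdsGT_zero
  have h2 : Filter.Tendsto (fun δ : ℝ => (-Real.log δ)⁻¹) (𝓝[>] (0:ℝ)) (𝓝 0) :=
    tendsto_inv_atTop_zero.comp h1
  have h3 := h2.const_mul
    (((Real.log 2 - Real.log (Metric.diam K)) / Real.log c + 1) * Real.log k)
  have hGlim : Filter.Tendsto (fun δ : ℝ => -Real.log k / Real.log c +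
      ((Real.log 2 - Real.log (Metric.diam K)) / Real.log c + 1) * Real.log k *
        (-Real.log δ)⁻¹) (𝓝[>] (0:ℝ)) (𝓝 (-Real.log k / Real.log c)) := by
    have h0 : Filter.Tendsto (fun _ : ℝ => -Real.log k / Real.log c) (𝓝[>] (0:ℝ))
        (𝓝 (-Real.log k / Real.log c)) := tendsto_const_nhds
    simpa using h0.add h3
  -- the eventual inequality
  have hε : 0 < min 1 (Metric.diam K / 2) := lt_min one_pos (by linarith)
  have hev : ∀ᶠ δ in 𝓝[>] (0:ℝ),
      Real.log (packingNum K δ) / (-Real.log δ) ≤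
      -Real.log k / Real.log c +
        ((Real.log 2 - Real.log (Metric.diam K)) / Real.log c + 1) * Real.log k *
          (-Real.log δ)⁻¹ := by
    filter_upwards [Ioo_mem_nhdsGT_of_mem ⟨le_refl (0:ℝ), hε⟩] with δ hδ
    obtain ⟨hδ0, hδm⟩ := hδ
    have hδ1 : δ < 1 := lt_of_lt_of_le hδm (min_le_left _ _)
    have hδD : 2 * δ < Metric.diam K := by
      have := lt_of_lt_of_le hδm (min_le_right _ _); linarith
    have hlogδ : Real.log δ < 0 := Real.log_neg hδ0 hδ1
    have hld0 : Real.log δ ≠ 0 := hlogδ.ne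
    have hnl : 0 < -Real.log δ := by linarith
    have hq : 0 < 2 * δ / Metric.diam K := by positivity
    have hq1 : 2 * δ / Metric.diam K < 1 := (div_lt_one hD).2 hδD
    have hlq : Real.log (2 * δ / Metric.diam K) < 0 := Real.log_neg hq hq1
    set r : ℝ := Real.log (2 * δ / Metric.diam K) / Real.log c with hrdef
    have hr0 : 0 ≤ r := le_of_lt (div_pos_of_neg_of_neg hlq hlc)
    set n : ℕ := ⌈r⌉₊ with hndef
    have hnr : r ≤ (n : ℝ) := Nat.le_ceil r
    have hcn : c ^ n * Metric.diam K ≤ 2 * δ := by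
      have ha : (n : ℝ) * Real.log c ≤ r * Real.log c :=
        mul_le_mul_of_nonpos_right hnr hlc.le
      have hb : r * Real.log c = Real.log (2 * δ / Metric.diam K) :=
        div_mul_cancel₀ _ hlc0
      have hc3 : Real.log (c ^ n) ≤ Real.log (2 * δ / Metric.diam K) := by
        rw [Real.log_pow]; linarith
      have hc4 : c ^ n ≤ 2 * δ / Metric.diam K :=
        (Real.log_le_log_iff (pow_pos hc0 n) hq).1 hc3
      calc c ^ n * Metric.diam K ≤ (2 * δ / Metric.diam K) * Metric.diam K :=
            mul_le_mul_of_nonneg_right hc4 hD.le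
        _ = 2 * δ := by field_simp
    have hbound : ∀ m ∈ {m : ℕ | ∃ t : Finset (EuclideanSpace ℝ (Fin d)), t.card = m ∧
        ↑t ⊆ K ∧ (t : Set (EuclideanSpace ℝ (Fin d))).Pairwise fun x y =>
          Disjoint (Metric.closedBall x δ) (Metric.closedBall y δ)}, m ≤ k ^ n := by
      intro m hm
      refine packing_mem_le (subset_union_pieces hK n) ?_ (hpiece_bd n) hm
      intro ω
      rw [hpiece_diam n ω]
      exact hcn
    have h1mem : 1 ∈ {m : ℕ | ∃ t : Finset (EuclideanSpace ℝ (Fin d)), t.card = m ∧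
        ↑t ⊆ K ∧ (t : Set (EuclideanSpace ℝ (Fin d))).Pairwise fun x y =>
          Disjoint (Metric.closedBall x δ) (Metric.closedBall y δ)} := by
      obtain ⟨x, hx⟩ := hne
      exact ⟨{x}, Finset.card_singleton x, by simpa using hx, by simp⟩
    have hP1 : 1 ≤ packingNum K δ :=
      le_csSup ⟨k ^ n, fun m hm => hbound m hm⟩ h1mem
    have hPle : packingNum K δ ≤ k ^ n := csSup_le ⟨1, h1mem⟩ hbound
    have hlogP : Real.log (packingNum K δ) ≤ (n : ℝ) * Real.log k := by
      have ha : (1:ℝ) ≤ (packingNum K δ : ℝ) := by exact_mod_cast hP1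
      have hb : (packingNum K δ : ℝ) ≤ (k : ℝ) ^ n := by exact_mod_cast hPle
      calc Real.log (packingNum K δ) ≤ Real.log ((k:ℝ) ^ n) :=
            Real.log_le_log (by linarith) hb
        _ = (n : ℝ) * Real.log k := by rw [Real.log_pow]
    have hchain : Real.log (packingNum K δ) ≤ (r + 1) * Real.log k := by
      have hn1 : (n : ℝ) ≤ r + 1 := (Nat.ceil_lt_add_one hr0).le
      calc Real.log (packingNum K δ) ≤ (n : ℝ) * Real.log k := hlogP
        _ ≤ (r + 1) * Real.log k := mul_le_mul_of_nonneg_right hn1 hlk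
    have hfinal : Real.log (packingNum K δ) / (-Real.log δ) ≤
        ((r + 1) * Real.log k) / (-Real.log δ) :=
      div_le_div_of_nonneg_right' hchain hnl
    have heq : ((r + 1) * Real.log k) / (-Real.log δ) =
        -Real.log k / Real.log c +
          ((Real.log 2 - Real.log (Metric.diam K)) / Real.log c + 1) * Real.log k *
            (-Real.log δ)⁻¹ := by
      rw [hrdef, Real.log_div (by positivity) hD.ne', Real.log_mul two_ne_zero hδ0.ne']
      field_simp
      ring
    calc Real.log (packingNum K δ) / (-Real.log δ) ≤
        ((r + 1) * Real.log k) / (-Real.log δ) := hfinal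
      _ = _ := heq
  exact le_of_tendsto_of_tendsto hbox hGlim hev
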